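/- arXiv:2205.08801 — 2 statements merged into one kernel-verified Lean document; each statement's English description precedes it below -/
import Mathlib

section
/- For q ≥ 2 and any bipartite density matrix ρ_AB with reduced states ρ_A and ρ_B, the inequality F_q(ρ_AB) ≤ F_q(ρ_A) + F_q(ρ_B) holds, where F_q(ρ) = 1 - Tr(ρ^q). -/
/-!
In the product of the eigenbases of `ρA` and `ρB`, the diagonal `p a b` of `ρAB` is a probability
distribution whose marginals are the spectra of `ρA` and `ρB`. Being the diagonal of a unitary
conjugate of `ρAB`, it is the image of the spectrum of `ρAB` under a doubly stochastic matrix, so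
`∑ p ^ q ≤ Tr (ρAB ^ q)` by convexity. It remains to prove the classical inequality
`∑ μ ^ q + ∑ ν ^ q ≤ 1 + ∑ p ^ q` for a distribution `p` with marginals `μ`, `ν`. Writing
`μ a ^ q = ∑ b, p a b * μ a ^ (q - 1)`, it follows termwise from `x ^ t + y ^ t ≤ 1 + p ^ t`
for `t = q - 1 ≥ 1`, which holds because `p ≤ x, y ≤ x + y - p ≤ 1` and `x ^ t` is convex.
-/

open scoped BigOperators ComplexOrder

/-- `Tr(ρ^q)` for a Hermitian matrix `ρ`, defined via its spectral decomposition. -/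
noncomputable def traceRpow {m : Type*} [Fintype m] [DecidableEq m]
    (ρ : Matrix m m ℂ) (h : ρ.IsHermitian) (q : ℝ) : ℝ :=
  ∑ i, (h.eigenvalues i) ^ q

/-- `F_q(ρ) = 1 - Tr(ρ^q)`. -/
noncomputable def FqEnt {m : Type*} [Fintype m] [DecidableEq m]
    (ρ : Matrix m m ℂ) (h : ρ.IsHermitian) (q : ℝ) : ℝ :=
  1 - traceRpow ρ h q

open Finset Matrix Kronecker

theorem ConvexOn.map_add_map_le_of_add_eq {s : Set ℝ} {f : ℝ → ℝ} (hf : ConvexOn ℝ s f)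
    {a c x y : ℝ} (ha : a ∈ s) (hc : c ∈ s) (hax : a ≤ x) (hxc : x ≤ c) (hxy : x + y = a + c) :
    f x + f y ≤ f a + f c := by
  rcases hax.eq_or_lt with rfl | hac
  · rw [show y = c by linarith, add_comm]
  have hca : 0 < c - a := by linarith
  set w := (x - a) / (c - a)
  have hw : w * (c - a) = x - a := div_mul_cancel₀ _ hca.ne'
  have hw₀ : 0 ≤ w := div_nonneg (by linarith) hca.le
  have hw₁ : 0 ≤ 1 - w := sub_nonneg.2 ((div_le_one hca).2 (by linarith))
  -- `x` and `y` are the convex combinations of `a` and `c` with swapped weights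
  have hfx := hf.2 ha hc hw₁ hw₀ (by ring)
  have hfy := hf.2 ha hc hw₀ hw₁ (by ring)
  rw [show (1 - w) • a + w • c = x by simp only [smul_eq_mul]; linear_combination hw] at hfx
  rw [show w • a + (1 - w) • c = y by simp only [smul_eq_mul]; linear_combination -hw - hxy] at hfy
  simp only [smul_eq_mul] at hfx hfy
  linarith

theorem rpow_add_rpow_le_one_add_rpow {t p x y : ℝ} (ht : 1 ≤ t) (hp : 0 ≤ p) (hpx : p ≤ x)
    (hpy : p ≤ y) (hxy : x + y - p ≤ 1) : x ^ t + y ^ t ≤ 1 + p ^ t := by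
  have hconv : ConvexOn ℝ (Set.Ici 0) (· ^ t : ℝ → ℝ) := convexOn_rpow ht
  calc x ^ t + y ^ t ≤ p ^ t + (x + y - p) ^ t :=
        hconv.map_add_map_le_of_add_eq hp (by simp; linarith) hpx (by linarith) (by ring)
    _ ≤ p ^ t + 1 := by gcongr; exact Real.rpow_le_one (by linarith) hxy (by linarith)
    _ = 1 + p ^ t := add_comm _ _

theorem sum_add_sum_sub_le_sum_sum {A B : Type*} [Fintype A] [Fintype B] {p : A → B → ℝ}
    (hp : ∀ a b, 0 ≤ p a b) (a : A) (b : B) :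
    (∑ b', p a b') + (∑ a', p a' b) - p a b ≤ ∑ a', ∑ b', p a' b' := by
  classical
  have hcol := add_sum_erase univ (fun a' => p a' b) (mem_univ a)
  have hrows := add_sum_erase univ (fun a' => ∑ b', p a' b') (mem_univ a)
  have hle : ∑ a' ∈ univ.erase a, p a' b ≤ ∑ a' ∈ univ.erase a, ∑ b', p a' b' :=
    sum_le_sum fun a' _ => single_le_sum (fun b' _ => hp a' b') (mem_univ b)
  linarith

theorem sum_rpow_sum_add_sum_rpow_sum_le {A B : Type*} [Fintype A] [Fintype B] {p : A → B → ℝ}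
    {q : ℝ} (hq : 2 ≤ q) (hp : ∀ a b, 0 ≤ p a b) (hsum : ∑ a, ∑ b, p a b = 1) :
    ∑ a, (∑ b, p a b) ^ q + ∑ b, (∑ a, p a b) ^ q ≤ 1 + ∑ a, ∑ b, p a b ^ q := by
  have hrpow : ∀ x : ℝ, 0 ≤ x → x ^ q = x * x ^ (q - 1) := fun x hx => by
    rw [← Real.rpow_one_add' hx (by linarith), add_sub_cancel]
  have hrow_nonneg : ∀ a, 0 ≤ ∑ b, p a b := fun a => sum_nonneg fun b _ => hp a b
  have hcol_nonneg : ∀ b, 0 ≤ ∑ a, p a b := fun b => sum_nonneg fun a _ => hp a b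
  calc ∑ a, (∑ b, p a b) ^ q + ∑ b, (∑ a, p a b) ^ q
      = ∑ a, ∑ b, p a b * ((∑ b', p a b') ^ (q - 1) + (∑ a', p a' b) ^ (q - 1)) := by
        simp only [mul_add, sum_add_distrib, ← sum_mul, hrpow _ (hrow_nonneg _),
          hrpow _ (hcol_nonneg _)]
        rw [sum_comm (f := fun a b => p a b * _)]
        simp only [← sum_mul]
    _ ≤ ∑ a, ∑ b, p a b * (1 + p a b ^ (q - 1)) := by
        refine sum_le_sum fun a _ => sum_le_sum fun b _ => mul_le_mul_of_nonneg_left ?_ (hp a b)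
        exact rpow_add_rpow_le_one_add_rpow (by linarith) (hp a b)
          (single_le_sum (fun b' _ => hp a b') (mem_univ b))
          (single_le_sum (fun a' _ => hp a' b) (mem_univ a))
          ((sum_add_sum_sub_le_sum_sum hp a b).trans hsum.le)
    _ = 1 + ∑ a, ∑ b, p a b ^ q := by
        simp only [mul_add, mul_one, sum_add_distrib, hsum, ← hrpow _ (hp _ _)]

section DoublyStochastic

variable {n : Type*} [Fintype n] [DecidableEq n]

theorem ConvexOn.sum_map_mulVec_le {D : Matrix n n ℝ} (hD : D ∈ doublyStochastic ℝ n)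
    {s : Set ℝ} {f : ℝ → ℝ} (hf : ConvexOn ℝ s f) {x : n → ℝ} (hx : ∀ i, x i ∈ s) :
    ∑ i, f ((D *ᵥ x) i) ≤ ∑ i, f (x i) :=
  calc ∑ i, f ((D *ᵥ x) i) ≤ ∑ i, ∑ j, D i j * f (x j) := sum_le_sum fun i _ =>
        hf.map_sum_le (fun j _ => nonneg_of_mem_doublyStochastic hD)
          (sum_row_of_mem_doublyStochastic hD i) fun j _ => hx j
    _ = ∑ j, f (x j) := by
        rw [sum_comm]
        simp only [← sum_mul, sum_col_of_mem_doublyStochastic hD, one_mul]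

theorem norm_sq_entries_mem_doublyStochastic {𝕜 : Type*} [RCLike 𝕜] {S : Matrix n n 𝕜}
    (hS : S ∈ unitaryGroup n 𝕜) : of (fun i j => ‖S i j‖ ^ 2) ∈ doublyStochastic ℝ n := by
  have hrow (i : n) : ∑ j, ‖S i j‖ ^ 2 = 1 := by
    have := congr_fun₂ (mem_unitaryGroup_iff.1 hS) i i
    simp only [mul_apply, star_apply, RCLike.star_def, RCLike.mul_conj, one_apply_eq] at this
    exact_mod_cast this
  have hcol (j : n) : ∑ i, ‖S i j‖ ^ 2 = 1 := by
    have := congr_fun₂ (mem_unitaryGroup_iff'.1 hS) j j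
    simp only [mul_apply, star_apply, RCLike.star_def, RCLike.conj_mul, one_apply_eq] at this
    exact_mod_cast this
  exact mem_doublyStochastic_iff_sum.2 ⟨fun i j => sq_nonneg _, hrow, hcol⟩

end DoublyStochastic

namespace Matrix.IsHermitian

variable {n 𝕜 : Type*} [Fintype n] [DecidableEq n] [RCLike 𝕜] {M N : Matrix n n 𝕜}

theorem conj_eigenvectorUnitary_apply_self (hM : M.IsHermitian) (i : n) :
    ((hM.eigenvectorUnitary : Matrix n n 𝕜)ᴴ * M * hM.eigenvectorUnitary) i i =
      hM.eigenvalues i := by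
  have hdiag := hM.conjStarAlgAut_star_eigenvectorUnitary
  rw [Unitary.conjStarAlgAut_star_apply] at hdiag
  rw [← star_eq_conjTranspose, hdiag, diagonal_apply_eq, Function.comp_apply]

theorem exists_mem_doublyStochastic_re_diag_conj_eq (hM : M.IsHermitian)
    (hN : N ∈ unitaryGroup n 𝕜) :
    ∃ D ∈ doublyStochastic ℝ n, ∀ i, RCLike.re ((Nᴴ * M * N) i i) = (D *ᵥ hM.eigenvalues) i := by
  set T := Nᴴ * (hM.eigenvectorUnitary : Matrix n n 𝕜)
  have hT : T ∈ unitaryGroup n 𝕜 := mul_mem (Unitary.star_mem hN) hM.eigenvectorUnitary.2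
  have hconj : Nᴴ * M * N = T * diagonal (RCLike.ofReal ∘ hM.eigenvalues) * Tᴴ := by
    conv_lhs => rw [hM.spectral_theorem]
    simp [T, Matrix.mul_assoc, conjTranspose_mul, star_eq_conjTranspose]
  refine ⟨_, norm_sq_entries_mem_doublyStochastic hT, fun i => ?_⟩
  rw [hconj, mul_apply]
  simp only [mul_diagonal, conjTranspose_apply, RCLike.star_def, Function.comp_apply, map_sum,
    mulVec, dotProduct, of_apply]
  refine sum_congr rfl fun k _ => ?_
  rw [mul_right_comm, RCLike.mul_conj]
  norm_cast

theorem sum_map_re_diag_conj_le (hM : M.IsHermitian) (hN : N ∈ unitaryGroup n 𝕜)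
    {s : Set ℝ} {f : ℝ → ℝ} (hf : ConvexOn ℝ s f) (hs : ∀ i, hM.eigenvalues i ∈ s) :
    ∑ i, f (RCLike.re ((Nᴴ * M * N) i i)) ≤ ∑ i, f (hM.eigenvalues i) := by
  obtain ⟨D, hD, hdiag⟩ := hM.exists_mem_doublyStochastic_re_diag_conj_eq hN
  simp only [hdiag]
  exact hf.sum_map_mulVec_le hD hs

end Matrix.IsHermitian

namespace Matrix

section PartialTrace

variable {R A B : Type*} [Fintype A] [Fintype B]

def partialTraceRight [AddCommMonoid R] (M : Matrix (A × B) (A × B) R) : Matrix A A R :=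
  of fun a a' => ∑ b, M (a, b) (a', b)

def partialTraceLeft [AddCommMonoid R] (M : Matrix (A × B) (A × B) R) : Matrix B B R :=
  of fun b b' => ∑ a, M (a, b) (a, b')

variable [CommSemiring R]

theorem partialTraceRight_kronecker_one_mul [DecidableEq B] (X : Matrix A A R)
    (M : Matrix (A × B) (A × B) R) :
    partialTraceRight ((X ⊗ₖ (1 : Matrix B B R)) * M) = X * partialTraceRight M := by
  ext a a'
  simpa [partialTraceRight, mul_apply, Fintype.sum_prod_type, one_apply, mul_sum] using sum_comm

theorem partialTraceRight_mul_kronecker_one [DecidableEq B] (M : Matrix (A × B) (A × B) R)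
    (X : Matrix A A R) :
    partialTraceRight (M * (X ⊗ₖ (1 : Matrix B B R))) = partialTraceRight M * X := by
  ext a a'
  simpa [partialTraceRight, mul_apply, Fintype.sum_prod_type, one_apply, sum_mul] using sum_comm

theorem partialTraceRight_one_kronecker_mul_comm [DecidableEq A] (Y : Matrix B B R)
    (M : Matrix (A × B) (A × B) R) :
    partialTraceRight (((1 : Matrix A A R) ⊗ₖ Y) * M) = partialTraceRight (M * (1 ⊗ₖ Y)) := by
  ext a a'
  simpa [partialTraceRight, mul_apply, Fintype.sum_prod_type, one_apply, mul_comm] using sum_comm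

variable [StarRing R] [DecidableEq A] [DecidableEq B]

theorem partialTraceRight_conj_kronecker (M : Matrix (A × B) (A × B) R) (U : Matrix A A R)
    {V : Matrix B B R} (hV : V * Vᴴ = 1) :
    partialTraceRight ((U ⊗ₖ V)ᴴ * M * (U ⊗ₖ V)) = Uᴴ * partialTraceRight M * U := by
  have hsplit : U ⊗ₖ V = (1 ⊗ₖ V) * (U ⊗ₖ 1) := by rw [← mul_kronecker_mul, one_mul, mul_one]
  have hsplit_conj : (U ⊗ₖ V)ᴴ = (Uᴴ ⊗ₖ 1) * (1 ⊗ₖ Vᴴ) := by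
    rw [conjTranspose_kronecker, ← mul_kronecker_mul, one_mul, mul_one]
  rw [hsplit_conj, hsplit, Matrix.mul_assoc, Matrix.mul_assoc, partialTraceRight_kronecker_one_mul,
    ← Matrix.mul_assoc, ← Matrix.mul_assoc, partialTraceRight_mul_kronecker_one,
    Matrix.mul_assoc _ M, partialTraceRight_one_kronecker_mul_comm, Matrix.mul_assoc M,
    ← mul_kronecker_mul, one_mul, hV, one_kronecker_one, mul_one, Matrix.mul_assoc]

theorem partialTraceLeft_conj_kronecker (M : Matrix (A × B) (A × B) R) {U : Matrix A A R}
    (hU : U * Uᴴ = 1) (V : Matrix B B R) :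
    partialTraceLeft ((U ⊗ₖ V)ᴴ * M * (U ⊗ₖ V)) = Vᴴ * partialTraceLeft M * V := by
  let e : B × A ≃ A × B := Equiv.prodComm B A
  have hswap : (U ⊗ₖ V).submatrix e e = V ⊗ₖ U := by ext; exact mul_comm _ _
  have hleft (N : Matrix (A × B) (A × B) R) :
      partialTraceLeft N = partialTraceRight (N.submatrix e e) := rfl
  rw [hleft, hleft, ← partialTraceRight_conj_kronecker _ V hU, ← hswap, conjTranspose_submatrix,
    submatrix_mul_equiv, submatrix_mul_equiv]

end PartialTrace

end Matrix

section ProductEigenbasis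

variable {𝕜 A B : Type*} [RCLike 𝕜] [Fintype A] [DecidableEq A] [Fintype B] [DecidableEq B]
  {ρAB : Matrix (A × B) (A × B) 𝕜} {ρA : Matrix A A 𝕜} {ρB : Matrix B B 𝕜}
  (hA : ρA.IsHermitian) (hB : ρB.IsHermitian)

noncomputable def productEigenvectorUnitary : Matrix (A × B) (A × B) 𝕜 :=
  (hA.eigenvectorUnitary : Matrix A A 𝕜) ⊗ₖ (hB.eigenvectorUnitary : Matrix B B 𝕜)

theorem productEigenvectorUnitary_mem_unitaryGroup :
    productEigenvectorUnitary hA hB ∈ unitaryGroup (A × B) 𝕜 :=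
  kronecker_mem_unitary hA.eigenvectorUnitary.2 hB.eigenvectorUnitary.2

variable (ρAB) in
noncomputable def productEigenbasisDiag (a : A) (b : B) : ℝ :=
  RCLike.re (((productEigenvectorUnitary hA hB)ᴴ * ρAB * productEigenvectorUnitary hA hB)
    (a, b) (a, b))

theorem productEigenbasisDiag_nonneg (hρ : ρAB.PosSemidef) (a : A) (b : B) :
    0 ≤ productEigenbasisDiag ρAB hA hB a b :=
  (RCLike.nonneg_iff.1 (hρ.conjTranspose_mul_mul_same _).diag_nonneg).1

theorem sum_productEigenbasisDiag_right (hρA : partialTraceRight ρAB = ρA) (a : A) :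
    ∑ b, productEigenbasisDiag ρAB hA hB a b = hA.eigenvalues a := by
  have h := congr_fun₂ (partialTraceRight_conj_kronecker ρAB hA.eigenvectorUnitary
    (mem_unitaryGroup_iff.1 hB.eigenvectorUnitary.2)) a a
  rw [hρA, hA.conj_eigenvectorUnitary_apply_self] at h
  simp only [productEigenbasisDiag, ← map_sum]
  exact (congrArg RCLike.re h).trans (RCLike.ofReal_re _)

theorem sum_productEigenbasisDiag_left (hρB : partialTraceLeft ρAB = ρB) (b : B) :
    ∑ a, productEigenbasisDiag ρAB hA hB a b = hB.eigenvalues b := by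
  have h := congr_fun₂ (partialTraceLeft_conj_kronecker ρAB
    (mem_unitaryGroup_iff.1 hA.eigenvectorUnitary.2) hB.eigenvectorUnitary) b b
  rw [hρB, hB.conj_eigenvectorUnitary_apply_self] at h
  simp only [productEigenbasisDiag, ← map_sum]
  exact (congrArg RCLike.re h).trans (RCLike.ofReal_re _)

theorem sum_sum_productEigenbasisDiag :
    ∑ a, ∑ b, productEigenbasisDiag ρAB hA hB a b = RCLike.re ρAB.trace := by
  have hN : productEigenvectorUnitary hA hB * (productEigenvectorUnitary hA hB)ᴴ = 1 :=
    mem_unitaryGroup_iff.1 (productEigenvectorUnitary_mem_unitaryGroup hA hB)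
  have htr : ((productEigenvectorUnitary hA hB)ᴴ * ρAB * productEigenvectorUnitary hA hB).trace =
      ρAB.trace := by
    rw [trace_mul_cycle, hN, one_mul]
  simp only [productEigenbasisDiag, ← map_sum, ← Fintype.sum_prod_type']
  exact congrArg RCLike.re htr

theorem sum_sum_map_productEigenbasisDiag_le (hρ : ρAB.IsHermitian) {s : Set ℝ} {f : ℝ → ℝ}
    (hf : ConvexOn ℝ s f) (hs : ∀ k, hρ.eigenvalues k ∈ s) :
    ∑ a, ∑ b, f (productEigenbasisDiag ρAB hA hB a b) ≤ ∑ k, f (hρ.eigenvalues k) := by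
  rw [← Fintype.sum_prod_type']
  exact hρ.sum_map_re_diag_conj_le (productEigenvectorUnitary_mem_unitaryGroup hA hB) hf hs

end ProductEigenbasis

theorem stmt2 {A B : Type*} [Fintype A] [DecidableEq A] [Fintype B] [DecidableEq B]
    (q : ℝ) (hq : 2 ≤ q)
    (ρAB : Matrix (A × B) (A × B) ℂ) (hρ : ρAB.PosSemidef) (htr : ρAB.trace = 1)
    (ρA : Matrix A A ℂ) (hρA : ∀ a a', ρA a a' = ∑ b, ρAB (a, b) (a', b))
    (ρB : Matrix B B ℂ) (hρB : ∀ b b', ρB b b' = ∑ a, ρAB (a, b) (a, b'))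
    (hA : ρA.IsHermitian) (hB : ρB.IsHermitian) :
    FqEnt ρAB hρ.1 q ≤ FqEnt ρA hA q + FqEnt ρB hB q := by
  have hmarg := sum_rpow_sum_add_sum_rpow_sum_le hq (productEigenbasisDiag_nonneg hA hB hρ)
    (by rw [sum_sum_productEigenbasisDiag, htr, RCLike.one_re])
  simp only [sum_productEigenbasisDiag_right hA hB (ext hρA).symm,
    sum_productEigenbasisDiag_left hA hB (ext hρB).symm] at hmarg
  have hmajor := sum_sum_map_productEigenbasisDiag_le hA hB hρ.1
    (convexOn_rpow (show 1 ≤ q by linarith)) hρ.eigenvalues_nonneg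
  simp only [FqEnt, traceRpow]
  linarith
end

section
/- For the 4-partite star network state |φ⟩_{1234} = (1/(2√2)) Σ_{a,b,c ∈ {0,1}} |4a+2b+c⟩|a⟩|b⟩|c⟩ on ℂ⁸⊗ℂ²⊗ℂ²⊗ℂ², the marginal q-concurrences satisfy C_q^{12|34} = 1 - 4^{1-q}, C_q^{1|234} = 1 - 8^{1-q}, and C_q^{2|134} = C_q^{3|124} = C_q^{4|123} = 1 - 2^{1-q}, and hence C_q^{12|34} ≤ C_q^{1|234} + C_q^{2|134} for all q ≥ 2. -/
open scoped BigOperators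

/-- The single-party reduced density matrix `ρ_j` of a pure multipartite state `ψ`. -/
noncomputable def reduced1 {n : ℕ} (d : Fin n → ℕ) (ψ : (∀ i, Fin (d i)) → ℂ)
    (j : Fin n) : Matrix (Fin (d j)) (Fin (d j)) ℂ :=
  fun x y => ∑ f : ∀ i, Fin (d i),
    if f j = x then ψ f * star (ψ (Function.update f j y)) else 0
/-- The reduced density matrix of a pure multipartite state `ψ` on the group of
parties `S`. -/
noncomputable def reducedS {n : ℕ} (d : Fin n → ℕ) (ψ : (∀ i, Fin (d i)) → ℂ)
    (S : Finset (Fin n)) :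
    Matrix (∀ i : {i // i ∈ S}, Fin (d i)) (∀ i : {i // i ∈ S}, Fin (d i)) ℂ :=
  fun x y => ∑ z : ∀ i : {i : Fin n // i ∉ S}, Fin (d i),
    ψ (fun i => if h : i ∈ S then x ⟨i, h⟩ else z ⟨i, h⟩) *
      star (ψ (fun i => if h : i ∈ S then y ⟨i, h⟩ else z ⟨i, h⟩))

/-- The 4-partite star network state on `ℂ⁸ ⊗ ℂ² ⊗ ℂ² ⊗ ℂ²`:
`(1/(2√2)) ∑_{a,b,c} |4a+2b+c⟩|a⟩|b⟩|c⟩`. -/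
noncomputable def starState : (∀ i, Fin (![8, 2, 2, 2] i)) → ℂ := fun f =>
  if (f 0 : ℕ) = 4 * (f 1 : ℕ) + 2 * (f 2 : ℕ) + (f 3 : ℕ)
  then ((1 / (2 * Real.sqrt 2) : ℝ) : ℂ) else 0

/-!
Each marginal ρ of the star state is N / 8 for a natural-number matrix N counting the basis
states of the complementary parties shared by two basis states of the subsystem. For the cuts
in question N² = k N and tr N = 8 (a finite check), so ρ² = (k/8) ρ: the eigenvalues of ρ lie
in {0, k/8} and sum to 1, whence Tr ρ^q = (8/k)^(1-q), with k = 2 for 12|34, k = 1 for 1|234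
and k = 4 for the single qubits. With t = 2^(1-q) ∈ (0, 1] the inequality reads
1 - t² ≤ (1 - t³) + (1 - t), i.e. (1 - t)(1 + t²) ≥ 0.
-/

open Matrix

open Polynomial in
theorem Matrix.IsHermitian.eigenvalues_eq_zero_or_eq_of_mul_self_eq_smul {m : Type*}
    [Fintype m] [DecidableEq m] {A : Matrix m m ℂ} (hA : A.IsHermitian) {c : ℝ}
    (hsq : A * A = c • A) (i : m) : hA.eigenvalues i = 0 ∨ hA.eigenvalues i = c := by
  have : Nonempty m := ⟨i⟩
  have hmem := spectrum.subset_polynomial_aeval A (X ^ 2 - C c * X)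
    ⟨_, hA.eigenvalues_mem_spectrum_real i, rfl⟩
  have hannihilates : aeval A (X ^ 2 - C c * X) = 0 := by
    rw [map_sub, map_mul, aeval_C, aeval_X, map_pow, aeval_X, ← Algebra.smul_def, sq, hsq,
      sub_self]
  rw [hannihilates, spectrum.zero_eq, Set.mem_singleton_iff] at hmem
  have hroot : hA.eigenvalues i * (hA.eigenvalues i - c) = 0 := by
    simp only [eval_sub, eval_pow, eval_X, eval_mul, eval_C] at hmem
    linear_combination hmem
  simpa [sub_eq_zero] using hroot

theorem traceRpow_eq_rpow_sub_one_of_mul_self_eq_smul {m : Type*} [Fintype m] [DecidableEq m]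
    {A : Matrix m m ℂ} (hA : A.IsHermitian) {c : ℝ} (hsq : A * A = c • A) (htr : A.trace = 1)
    {q : ℝ} (hq : q ≠ 0) : traceRpow A hA q = c ^ (q - 1) := by
  have hsum : ∑ i, hA.eigenvalues i = 1 := by
    apply Complex.ofReal_injective
    rw [Complex.ofReal_sum, Complex.ofReal_one, ← htr, hA.trace_eq_sum_eigenvalues]
    rfl
  have hterm : ∀ i, hA.eigenvalues i ^ q = c ^ (q - 1) * hA.eigenvalues i := by
    intro i
    rcases hA.eigenvalues_eq_zero_or_eq_of_mul_self_eq_smul hsq i with h | h <;> rw [h]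
    · rw [Real.zero_rpow hq, mul_zero]
    · rcases eq_or_ne c 0 with rfl | hc
      · rw [Real.zero_rpow hq, mul_zero]
      · rw [Real.rpow_sub_one hc, div_mul_cancel₀ _ hc]
  rw [traceRpow, Finset.sum_congr rfl fun i _ => hterm i, ← Finset.mul_sum, hsum, mul_one]

theorem traceRpow_eq_of_eq_inv_smul_map_natCast {m : Type*} [Fintype m] [DecidableEq m]
    {N : Matrix m m ℕ} {k n : ℕ} (hsq : N * N = k • N) (htr : N.trace = n) (hn : n ≠ 0)
    {A : Matrix m m ℂ} (hA : A.IsHermitian) (hAN : A = ((n : ℂ)⁻¹) • N.map (↑))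
    {q : ℝ} (hq : q ≠ 0) : traceRpow A hA q = ((n : ℝ) / k) ^ (1 - q) := by
  rw [← neg_sub, Real.rpow_neg (by positivity), ← Real.inv_rpow (by positivity), inv_div]
  refine traceRpow_eq_rpow_sub_one_of_mul_self_eq_smul hA ?_ ?_ hq
  · have hsqC : N.map (Nat.cast : ℕ → ℂ) * N.map (↑) = (k : ℂ) • N.map (↑) := by
      ext i j
      have hij := congrFun (congrFun hsq i) j
      simp only [mul_apply, Matrix.smul_apply, map_apply, smul_eq_mul] at hij ⊢
      exact_mod_cast hij
    rw [hAN, smul_mul_smul_comm, hsqC, smul_smul, ← Complex.coe_smul, smul_smul]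
    congr 1
    push_cast
    ring
  · have htrC : (N.map (Nat.cast : ℕ → ℂ)).trace = n := by
      rw [← htr]
      exact (AddMonoidHom.map_trace (Nat.castAddMonoidHom ℂ) N).symm
    rw [hAN, trace_smul, htrC, smul_eq_mul, inv_mul_cancel₀ (Nat.cast_ne_zero.mpr hn)]

section IndicatorState

open Finset

variable {n : ℕ} (d : Fin n → ℕ) (P : (∀ i, Fin (d i)) → Prop) [DecidablePred P]

def reduced1Count (j : Fin n) : Matrix (Fin (d j)) (Fin (d j)) ℕ := fun x y =>
  #{f | f j = x ∧ P f ∧ P (Function.update f j y)}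

def reducedSCount (S : Finset (Fin n)) :
    Matrix (∀ i : {i // i ∈ S}, Fin (d i)) (∀ i : {i // i ∈ S}, Fin (d i)) ℕ := fun x y =>
  #{z : ∀ i : {i : Fin n // i ∉ S}, Fin (d i) |
    P (fun i => if h : i ∈ S then x ⟨i, h⟩ else z ⟨i, h⟩) ∧
      P (fun i => if h : i ∈ S then y ⟨i, h⟩ else z ⟨i, h⟩)}

theorem reduced1_ite (α : ℂ) (j : Fin n) :
    reduced1 d (fun f => if P f then α else 0) j =
      (α * star α) • (reduced1Count d P j).map (↑) := by
  ext x y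
  simp only [reduced1, reduced1Count, Matrix.smul_apply, Matrix.map_apply, smul_eq_mul,
    natCast_card_filter, mul_sum]
  refine sum_congr rfl fun f _ => ?_
  simp only [ite_and]
  split_ifs <;> simp

theorem reducedS_ite (α : ℂ) (S : Finset (Fin n)) :
    reducedS d (fun f => if P f then α else 0) S =
      (α * star α) • (reducedSCount d P S).map (↑) := by
  ext x y
  simp only [reducedS, reducedSCount, Matrix.smul_apply, Matrix.map_apply, smul_eq_mul,
    natCast_card_filter, mul_sum]
  refine sum_congr rfl fun f _ => ?_
  simp only [ite_and]
  split_ifs <;> simp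

end IndicatorState

abbrev starSupport (f : ∀ i, Fin (![8, 2, 2, 2] i)) : Prop :=
  (f 0 : ℕ) = 4 * (f 1 : ℕ) + 2 * (f 2 : ℕ) + (f 3 : ℕ)

theorem starState_eq_ite :
    starState = fun f => if starSupport f then ((1 / (2 * Real.sqrt 2) : ℝ) : ℂ) else 0 :=
  rfl

theorem starAmplitude_mul_star :
    ((1 / (2 * Real.sqrt 2) : ℝ) : ℂ) * star ((1 / (2 * Real.sqrt 2) : ℝ) : ℂ) =
      (8 : ℂ)⁻¹ := by
  have hsq : (1 / (2 * Real.sqrt 2)) * (1 / (2 * Real.sqrt 2)) = (8 : ℝ)⁻¹ := by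
    rw [div_mul_div_comm, one_mul, mul_mul_mul_comm, Real.mul_self_sqrt zero_le_two]
    norm_num
  rw [Complex.star_def, Complex.conj_ofReal, ← Complex.ofReal_mul, hsq]
  push_cast
  rfl

theorem reduced1_starState (j : Fin 4) :
    reduced1 ![8, 2, 2, 2] starState j =
      ((8 : ℕ) : ℂ)⁻¹ • (reduced1Count ![8, 2, 2, 2] starSupport j).map (↑) := by
  rw [starState_eq_ite, reduced1_ite, starAmplitude_mul_star, Nat.cast_ofNat]

theorem reducedS_starState (S : Finset (Fin 4)) :
    reducedS ![8, 2, 2, 2] starState S =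
      ((8 : ℕ) : ℂ)⁻¹ • (reducedSCount ![8, 2, 2, 2] starSupport S).map (↑) := by
  rw [starState_eq_ite, reducedS_ite, starAmplitude_mul_star, Nat.cast_ofNat]

theorem reduced1Count_starSupport_mul_self (j : Fin 4) :
    reduced1Count ![8, 2, 2, 2] starSupport j * reduced1Count ![8, 2, 2, 2] starSupport j =
      (8 / ![8, 2, 2, 2] j) • reduced1Count ![8, 2, 2, 2] starSupport j := by
  revert j
  decide

theorem trace_reduced1Count_starSupport (j : Fin 4) :
    (reduced1Count ![8, 2, 2, 2] starSupport j).trace = 8 := by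
  revert j
  decide

theorem reducedSCount_starSupport_mul_self :
    reducedSCount ![8, 2, 2, 2] starSupport {0, 1} *
        reducedSCount ![8, 2, 2, 2] starSupport {0, 1} =
      2 • reducedSCount ![8, 2, 2, 2] starSupport {0, 1} := by
  decide

theorem trace_reducedSCount_starSupport :
    (reducedSCount ![8, 2, 2, 2] starSupport {0, 1}).trace = 8 := by
  decide

theorem FqEnt_reduced1_starState (j : Fin 4)
    (hj : (reduced1 ![8, 2, 2, 2] starState j).IsHermitian) {q : ℝ} (hq : q ≠ 0) :
    FqEnt (reduced1 ![8, 2, 2, 2] starState j) hj q =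
      1 - ((![8, 2, 2, 2] j : ℕ) : ℝ) ^ (1 - q) := by
  rw [FqEnt, traceRpow_eq_of_eq_inv_smul_map_natCast (reduced1Count_starSupport_mul_self j)
    (trace_reduced1Count_starSupport j) (by norm_num) hj (reduced1_starState j) hq]
  fin_cases j <;> norm_num

theorem FqEnt_reducedS_starState (h : (reducedS ![8, 2, 2, 2] starState {0, 1}).IsHermitian)
    {q : ℝ} (hq : q ≠ 0) :
    FqEnt (reducedS ![8, 2, 2, 2] starState {0, 1}) h q = 1 - (4 : ℝ) ^ (1 - q) := by
  rw [FqEnt, traceRpow_eq_of_eq_inv_smul_map_natCast reducedSCount_starSupport_mul_self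
    trace_reducedSCount_starSupport (by norm_num) h (reducedS_starState _) hq]
  norm_num

theorem one_sub_four_rpow_le {s : ℝ} (hs : s ≤ 0) :
    1 - (4 : ℝ) ^ s ≤ (1 - (8 : ℝ) ^ s) + (1 - (2 : ℝ) ^ s) := by
  set t := (2 : ℝ) ^ s
  have ht1 : t ≤ 1 := Real.rpow_le_one_of_one_le_of_nonpos (by norm_num) hs
  have h4 : (4 : ℝ) ^ s = t ^ 2 := by rw [Real.rpow_pow_comm (by norm_num)]; norm_num
  have h8 : (8 : ℝ) ^ s = t ^ 3 := by rw [Real.rpow_pow_comm (by norm_num)]; norm_num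
  have hfactor : (1 - t ^ 3 + (1 - t)) - (1 - t ^ 2) = (1 - t) * (1 + t ^ 2) := by ring
  rw [h4, h8]
  linarith [mul_nonneg (sub_nonneg.2 ht1) (by positivity : (0 : ℝ) ≤ 1 + t ^ 2)]

theorem stmt15 (q : ℝ) (hq : 2 ≤ q)
    (h12 : (reducedS ![8, 2, 2, 2] starState {0, 1}).IsHermitian)
    (hherm : ∀ j, (reduced1 ![8, 2, 2, 2] starState j).IsHermitian) :
    FqEnt (reducedS ![8, 2, 2, 2] starState {0, 1}) h12 q = 1 - (4 : ℝ) ^ (1 - q) ∧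
    FqEnt (reduced1 ![8, 2, 2, 2] starState 0) (hherm 0) q = 1 - (8 : ℝ) ^ (1 - q) ∧
    (∀ j : Fin 4, j ≠ 0 →
      FqEnt (reduced1 ![8, 2, 2, 2] starState j) (hherm j) q = 1 - (2 : ℝ) ^ (1 - q)) ∧
    FqEnt (reducedS ![8, 2, 2, 2] starState {0, 1}) h12 q ≤
      FqEnt (reduced1 ![8, 2, 2, 2] starState 0) (hherm 0) q +
        FqEnt (reduced1 ![8, 2, 2, 2] starState 1) (hherm 1) q := by
  have hq0 : q ≠ 0 := by linarith
  have hparty : ∀ j : Fin 4, j ≠ 0 →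
      FqEnt (reduced1 ![8, 2, 2, 2] starState j) (hherm j) q = 1 - (2 : ℝ) ^ (1 - q) := by
    intro j hj
    rw [FqEnt_reduced1_starState j _ hq0]
    fin_cases j <;> simp_all
  refine ⟨FqEnt_reducedS_starState h12 hq0, FqEnt_reduced1_starState 0 _ hq0, hparty, ?_⟩
  rw [FqEnt_reducedS_starState h12 hq0, FqEnt_reduced1_starState 0 _ hq0, hparty 1 one_ne_zero]
  exact one_sub_four_rpow_le (by linarith)
end
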